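/- Let q : ℝ^d × ℝ^d → ℂ with Re q(x,ξ) ≥ 0 and |q(x,ξ)| ≤ c(1+|ξ|²). Let f be a Schwartz function on ℝ^d with Fourier transform f̂ satisfying ∫ (1+|ξ|²)² |f̂(ξ)| dξ < ∞, and define U_h f(x) = ∫ e^{i x·ξ} e^{-h q(x,ξ)} f̂(ξ) dξ and A f(x) = -∫ e^{i x·ξ} q(x,ξ) f̂(ξ) dξ. Then sup_x |(U_h f(x) - f(x))/h - A f(x)| ≤ c² h ∫ (1+|ξ|²)² |f̂(ξ)| dξ, and in particular U_h f converges uniformly to f and (U_h f - f)/h converges uniformly to A f as h ↓ 0. -/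

import Mathlib

open Complex MeasureTheory RealInnerProductSpace Filter Topology Set

/-!
Write `z = h q(x, ξ)`. Since `Re z ≥ 0`, `|e^{-tz}| ≤ 1` for `t ≥ 0`, and the mean value inequality
along `t ∈ [0, 1]` gives `|e^{-z} - 1 + z| ≤ |z|²`. Hence the integrand of
`(U_h f - f)/h - A f` is at most `h |q|² |f̂| ≤ c² h (1 + |ξ|²)² |f̂|`, uniformly in `x`; the uniform
convergence statements follow since `A f` is bounded by `c ∫ (1 + |ξ|²)² |f̂|`.
-/

namespace Complex

lemma norm_exp_neg_le_one {z : ℂ} (hz : 0 ≤ z.re) : ‖cexp (-z)‖ ≤ 1 := by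
  rw [norm_exp, neg_re, Real.exp_le_one_iff, neg_nonpos]
  exact hz

lemma hasDerivAt_exp_neg_ofReal_mul (z : ℂ) (t : ℝ) :
    HasDerivAt (fun s : ℝ => cexp (-(s * z))) (cexp (-(t * z)) * -z) t := by
  simpa using ((hasDerivAt_id t).ofReal_comp.mul_const z).neg.cexp

lemma norm_exp_neg_sub_one_le {z : ℂ} (hz : 0 ≤ z.re) : ‖cexp (-z) - 1‖ ≤ ‖z‖ := by
  simpa using norm_image_sub_le_of_norm_deriv_le_segment_01'
    (fun t _ => (hasDerivAt_exp_neg_ofReal_mul z t).hasDerivWithinAt)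
    (fun t ht => by
      rw [norm_mul, norm_neg]
      exact mul_le_of_le_one_left (norm_nonneg z)
        (norm_exp_neg_le_one (by rw [re_ofReal_mul]; exact mul_nonneg ht.1 hz)))

lemma norm_exp_neg_sub_one_add_le {z : ℂ} (hz : 0 ≤ z.re) :
    ‖cexp (-z) - 1 + z‖ ≤ ‖z‖ ^ 2 := by
  have hderiv (t : ℝ) : HasDerivAt (fun s : ℝ => cexp (-(s * z)) + s * z)
      (-(cexp (-(t * z)) - 1) * z) t := by
    refine ((hasDerivAt_exp_neg_ofReal_mul z t).add
      ((hasDerivAt_id t).ofReal_comp.mul_const z)).congr_deriv ?_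
    push_cast
    ring
  have hbound (t : ℝ) (ht : t ∈ Ico (0 : ℝ) 1) : ‖-(cexp (-(t * z)) - 1) * z‖ ≤ ‖z‖ ^ 2 := by
    have hre : 0 ≤ (t * z).re := by rw [re_ofReal_mul]; exact mul_nonneg ht.1 hz
    calc ‖-(cexp (-(t * z)) - 1) * z‖ = ‖cexp (-(t * z)) - 1‖ * ‖z‖ := by
          rw [norm_mul, norm_neg]
      _ ≤ ‖(t : ℂ) * z‖ * ‖z‖ := by gcongr; exact norm_exp_neg_sub_one_le hre
      _ ≤ ‖z‖ ^ 2 := by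
          rw [norm_mul, norm_real, Real.norm_of_nonneg ht.1, sq]
          gcongr
          exact mul_le_of_le_one_left (norm_nonneg z) ht.2.le
  have := norm_image_sub_le_of_norm_deriv_le_segment_01'
    (fun t _ => (hderiv t).hasDerivWithinAt) hbound
  simpa [sub_add_eq_add_sub] using this

end Complex

section

variable {α : Type*} [MeasurableSpace α] {μ : Measure α} {z F : α → ℂ}

/-- `z * F` is the pointwise limit of the difference quotients `(F - e^{-t z} F) / t` as `t ↓ 0`. -/
lemma aestronglyMeasurable_mul_of_exp_neg_mul (hF : AEStronglyMeasurable F μ)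
    (hexp : ∀ t : ℝ, 0 < t → AEStronglyMeasurable (fun a => cexp (-(t * z a)) * F a) μ) :
    AEStronglyMeasurable (fun a => z a * F a) μ := by
  have ht : Tendsto (fun n : ℕ => 1 / ((n : ℝ) + 1)) atTop (𝓝[≠] 0) :=
    tendsto_nhdsWithin_of_tendsto_nhds_of_eventually_within _
      tendsto_one_div_add_atTop_nhds_zero_nat
      (Eventually.of_forall fun n => mem_compl_singleton_iff.mpr (by positivity))
  refine aestronglyMeasurable_of_tendsto_ae atTop
    (f := fun (n : ℕ) a => -(slope (fun s : ℝ => cexp (-(s * z a))) 0 (1 / ((n : ℝ) + 1)) * F a))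
    (fun n => ?_) (ae_of_all _ fun a => ?_)
  · have := (((hexp (1 / ((n : ℝ) + 1)) (by positivity)).sub hF).const_mul (-((n : ℂ) + 1)))
    refine this.congr (ae_of_all _ fun a => ?_)
    simp only [slope_def_module, sub_zero, one_div, inv_inv, ofReal_zero, zero_mul, neg_zero,
      Complex.exp_zero, real_smul, Pi.sub_apply]
    push_cast
    ring
  · simpa using (((hasDerivAt_iff_tendsto_slope.mp
      (Complex.hasDerivAt_exp_neg_ofReal_mul (z a) 0)).comp ht).mul_const (F a)).neg

lemma norm_integral_exp_neg_mul_sub_le {g : α → ℝ} {h : ℝ} (hh : 0 < h)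
    (hF : Integrable F μ) (hzF : Integrable (fun a => z a * F a) μ)
    (hexp : Integrable (fun a => cexp (-(h * z a)) * F a) μ) (hre : ∀ a, 0 ≤ (z a).re)
    (hg : Integrable g μ) (hzg : ∀ a, ‖z a‖ ^ 2 * ‖F a‖ ≤ g a) :
    ‖(∫ a, cexp (-(h * z a)) * F a ∂μ - ∫ a, F a ∂μ) / h - -∫ a, z a * F a ∂μ‖ ≤
      h * ∫ a, g a ∂μ := by
  have hrepr : (∫ a, cexp (-(h * z a)) * F a ∂μ - ∫ a, F a ∂μ) / h - -∫ a, z a * F a ∂μ =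
      ∫ a, (cexp (-(h * z a)) - 1 + h * z a) / h * F a ∂μ := by
    have hquot : Integrable (fun a => (cexp (-(h * z a)) * F a - F a) / h) μ :=
      (hexp.sub hF).div_const _
    rw [← integral_sub hexp hF, ← integral_div, sub_neg_eq_add, ← integral_add hquot hzF]
    congr 1 with a
    field_simp [ofReal_ne_zero.mpr hh.ne']
  rw [hrepr, ← integral_const_mul]
  refine norm_integral_le_of_norm_le (hg.const_mul h) (ae_of_all _ fun a => ?_)
  have hre' : 0 ≤ ((h : ℂ) * z a).re := by rw [re_ofReal_mul]; exact mul_nonneg hh.le (hre a)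
  calc ‖(cexp (-(h * z a)) - 1 + h * z a) / h * F a‖
      = ‖cexp (-(h * z a)) - 1 + h * z a‖ / h * ‖F a‖ := by
        rw [norm_mul, norm_div, norm_real, Real.norm_of_nonneg hh.le]
    _ ≤ ‖(h : ℂ) * z a‖ ^ 2 / h * ‖F a‖ := by
        gcongr; exact Complex.norm_exp_neg_sub_one_add_le hre'
    _ = h * (‖z a‖ ^ 2 * ‖F a‖) := by
        rw [norm_mul, norm_real, Real.norm_of_nonneg hh.le]; field_simp
    _ ≤ h * g a := by gcongr; exact hzg a

end

lemma exists_pos_forall_norm_sub_le_of_norm_diffQuot_sub_le {X : Type*} {U : ℝ → X → ℂ}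
    {f A : X → ℂ} {K B : ℝ} (hA : ∀ x, ‖A x‖ ≤ B)
    (hquot : ∀ h : ℝ, 0 < h → ∀ x, ‖(U h x - f x) / h - A x‖ ≤ K * h) :
    ∀ ε > (0 : ℝ), ∃ δ > (0 : ℝ), ∀ h : ℝ, 0 < h → h < δ → ∀ x,
      ‖U h x - f x‖ ≤ ε ∧ ‖(U h x - f x) / h - A x‖ ≤ ε := by
  intro ε hε
  set C := |K| + |B| + 1
  have hC : 0 < C := by positivity
  refine ⟨min 1 (ε / C), by positivity, fun h hh hδ x => ?_⟩
  have h1 : h ≤ 1 := (hδ.trans_le (min_le_left _ _)).le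
  have hCε : h * C ≤ ε := ((lt_div_iff₀ hC).mp (hδ.trans_le (min_le_right _ _))).le
  have hquot' : ‖(U h x - f x) / h - A x‖ ≤ |K| * h :=
    (hquot h hh x).trans (by gcongr; exact le_abs_self K)
  have hdiffQuot : ‖(U h x - f x) / h‖ ≤ C := calc
    ‖(U h x - f x) / h‖ ≤ ‖(U h x - f x) / h - A x‖ + ‖A x‖ := norm_le_norm_sub_add _ _
    _ ≤ |K| * 1 + |B| := add_le_add (hquot'.trans (by gcongr)) ((hA x).trans (le_abs_self B))
    _ ≤ C := by linarith
  constructor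
  · calc ‖U h x - f x‖ = h * ‖(U h x - f x) / h‖ := by
          rw [norm_div, norm_real, Real.norm_of_nonneg hh.le, mul_div_cancel₀ _ hh.ne']
      _ ≤ h * C := by gcongr
      _ ≤ ε := hCε
  · calc ‖(U h x - f x) / h - A x‖ ≤ |K| * h := hquot'
      _ ≤ h * C := by nlinarith [abs_nonneg B]
      _ ≤ ε := hCε

theorem euler_generator_approximation_general {d : ℕ}
    (q : EuclideanSpace ℝ (Fin d) → EuclideanSpace ℝ (Fin d) → ℂ) (c : ℝ)
    (hre : ∀ x ξ, 0 ≤ (q x ξ).re)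
    (hbound : ∀ x ξ, ‖q x ξ‖ ≤ c * (1 + ‖ξ‖ ^ 2))
    (fh : EuclideanSpace ℝ (Fin d) → ℂ)
    (hfh : Integrable (fun ξ => (1 + ‖ξ‖ ^ 2) ^ 2 * ‖fh ξ‖))
    (f : EuclideanSpace ℝ (Fin d) → ℂ)
    (hf : ∀ x, f x = ∫ ξ, Complex.exp (Complex.I * (⟪x, ξ⟫ : ℝ)) * fh ξ)
    (U : ℝ → EuclideanSpace ℝ (Fin d) → ℂ)
    (hU : ∀ h x, U h x =
      ∫ ξ, Complex.exp (Complex.I * (⟪x, ξ⟫ : ℝ)) *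
        Complex.exp (-(h : ℂ) * q x ξ) * fh ξ)
    (A : EuclideanSpace ℝ (Fin d) → ℂ)
    (hA : ∀ x, A x = -∫ ξ, Complex.exp (Complex.I * (⟪x, ξ⟫ : ℝ)) * q x ξ * fh ξ)
    (hqint : ∀ (h : ℝ) (x), 0 ≤ h → Integrable (fun ξ =>
      Complex.exp (Complex.I * (⟪x, ξ⟫ : ℝ)) *
        Complex.exp (-(h : ℂ) * q x ξ) * fh ξ)) :
    (∀ (h : ℝ), 0 < h → ∀ x,
      ‖(U h x - f x) / h - A x‖ ≤
        c ^ 2 * h * ∫ ξ, (1 + ‖ξ‖ ^ 2) ^ 2 * ‖fh ξ‖) ∧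
    (∀ ε > (0 : ℝ), ∃ δ > (0 : ℝ), ∀ (h : ℝ), 0 < h → h < δ → ∀ x,
      ‖U h x - f x‖ ≤ ε ∧
      ‖(U h x - f x) / h - A x‖ ≤ ε) := by
  set M := ∫ ξ, (1 + ‖ξ‖ ^ 2) ^ 2 * ‖fh ξ‖
  set F := fun x ξ => cexp (I * (⟪x, ξ⟫ : ℝ)) * fh ξ
  have hc : 0 ≤ c := by simpa using (norm_nonneg _).trans (hbound 0 0)
  have hU' (h : ℝ) x : U h x = ∫ ξ, cexp (-(h * q x ξ)) * F x ξ := by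
    rw [hU]; congr 1 with ξ; simp only [F, neg_mul]; ring
  have hA' x : A x = -∫ ξ, q x ξ * F x ξ := by
    rw [hA]; congr 2 with ξ; ring
  have hexpInt (h : ℝ) (hh : 0 ≤ h) x : Integrable (fun ξ => cexp (-(h * q x ξ)) * F x ξ) := by
    refine (hqint h x hh).congr (ae_of_all _ fun ξ => ?_); simp only [F, neg_mul]; ring
  have hFInt x : Integrable (F x) := by simpa using hexpInt 0 le_rfl x
  have hnormF x ξ : ‖F x ξ‖ = ‖fh ξ‖ := by simp [F, norm_exp]
  have hqF x ξ : ‖q x ξ * F x ξ‖ ≤ c * ((1 + ‖ξ‖ ^ 2) ^ 2 * ‖fh ξ‖) := by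
    rw [norm_mul, hnormF, ← mul_assoc]
    gcongr
    exact (hbound x ξ).trans (by gcongr; nlinarith [sq_nonneg ‖ξ‖])
  have hqFInt x : Integrable (fun ξ => q x ξ * F x ξ) :=
    (hfh.const_mul c).mono' (aestronglyMeasurable_mul_of_exp_neg_mul (hFInt x).1
      fun t ht => (hexpInt t ht.le x).1) (ae_of_all _ (hqF x))
  have hAbound x : ‖A x‖ ≤ c * M := by
    rw [hA', norm_neg, ← integral_const_mul]
    exact norm_integral_le_of_norm_le (hfh.const_mul c) (ae_of_all _ (hqF x))
  have hmain (h : ℝ) (hh : 0 < h) x : ‖(U h x - f x) / h - A x‖ ≤ c ^ 2 * h * M := by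
    rw [hU', hf, hA', mul_comm (c ^ 2), mul_assoc, ← integral_const_mul]
    refine norm_integral_exp_neg_mul_sub_le hh (hFInt x) (hqFInt x) (hexpInt h hh.le x) (hre x)
      (hfh.const_mul _) fun ξ => ?_
    rw [hnormF, ← mul_assoc, ← mul_pow]
    gcongr
    exact hbound x ξ
  exact ⟨hmain, exists_pos_forall_norm_sub_le_of_norm_diffQuot_sub_le (K := c ^ 2 * M) hAbound
    fun h hh x => (hmain h hh x).trans_eq (by ring)⟩

/-- Uniform generator approximation for the Euler-scheme transition operators:
`sup_x |(U_h f(x) - f(x))/h - A f(x)| ≤ c² h ∫ (1+|ξ|²)² |f̂(ξ)| dξ`,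
and consequently `U_h f → f` and `(U_h f - f)/h → A f` uniformly as `h ↓ 0`. -/
theorem euler_generator_approximation {d : ℕ}
    (q : EuclideanSpace ℝ (Fin d) → EuclideanSpace ℝ (Fin d) → ℂ) (c : ℝ)
    (hc : 0 < c)
    (hre : ∀ x ξ, 0 ≤ (q x ξ).re)
    (hbound : ∀ x ξ, ‖q x ξ‖ ≤ c * (1 + ‖ξ‖ ^ 2))
    (fh : EuclideanSpace ℝ (Fin d) → ℂ)
    (hfh : Integrable (fun ξ => (1 + ‖ξ‖ ^ 2) ^ 2 * ‖fh ξ‖))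
    (f : EuclideanSpace ℝ (Fin d) → ℂ)
    (hf : ∀ x, f x = ∫ ξ, Complex.exp (Complex.I * (⟪x, ξ⟫ : ℝ)) * fh ξ)
    (U : ℝ → EuclideanSpace ℝ (Fin d) → ℂ)
    (hU : ∀ h x, U h x =
      ∫ ξ, Complex.exp (Complex.I * (⟪x, ξ⟫ : ℝ)) *
        Complex.exp (-(h : ℂ) * q x ξ) * fh ξ)
    (A : EuclideanSpace ℝ (Fin d) → ℂ)
    (hA : ∀ x, A x = -∫ ξ, Complex.exp (Complex.I * (⟪x, ξ⟫ : ℝ)) * q x ξ * fh ξ)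
    (hqint : ∀ (h : ℝ) (x), 0 ≤ h → Integrable (fun ξ =>
      Complex.exp (Complex.I * (⟪x, ξ⟫ : ℝ)) *
        Complex.exp (-(h : ℂ) * q x ξ) * fh ξ)) :
    (∀ (h : ℝ), 0 < h → ∀ x,
      ‖(U h x - f x) / h - A x‖ ≤
        c ^ 2 * h * ∫ ξ, (1 + ‖ξ‖ ^ 2) ^ 2 * ‖fh ξ‖) ∧
    (∀ ε > (0 : ℝ), ∃ δ > (0 : ℝ), ∀ (h : ℝ), 0 < h → h < δ → ∀ x,
      ‖U h x - f x‖ ≤ ε ∧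
      ‖(U h x - f x) / h - A x‖ ≤ ε) :=
  euler_generator_approximation_general q c hre hbound fh hfh f hf U hU A hA hqint
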